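/- arXiv:1706.09516 — 2 statements merged into one kernel-verified Lean document; each statement's English description precedes it below -/
import Mathlib

section
/- Let X be a Binomial(n-1, 1/2) random variable with n ≥ 2. Then the conditional expectation E[1/(1+X) | X ≤ n-2] equals 2/n. -/
open Finset

lemma sumA (m : ℕ) : (∑ k ∈ range m, (m+1).choose (k+1)) + 2 = 2^(m+1) := by
  have h := Nat.sum_range_choose (m+1)
  rw [Finset.sum_range_succ, Finset.sum_range_succ'] at h
  simp only [Nat.choose_self, Nat.choose_zero_right] at h
  omega

lemma sumB (m : ℕ) : (∑ k ∈ range m, m.choose k) + 1 = 2^m := by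
  have h := Nat.sum_range_choose m
  rw [Finset.sum_range_succ] at h
  simp only [Nat.choose_self] at h
  omega

lemma sumC (m : ℕ) : ∑ k ∈ range m, ((m.choose k : ℚ)) * (1/((k:ℚ)+1))
    = (2^(m+1) - 2)/((m:ℚ)+1) := by
  have key : ∀ k, ((m.choose k : ℚ)) * (1/((k:ℚ)+1))
      = ((m+1).choose (k+1) : ℚ) / ((m:ℚ)+1) := by
    intro k
    have h := Nat.add_one_mul_choose_eq m k
    have h' : ((m:ℚ)+1) * (m.choose k) = ((m+1).choose (k+1)) * ((k:ℚ)+1) := by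
      exact_mod_cast h
    have hk : ((k:ℚ)+1) ≠ 0 := by positivity
    have hm : ((m:ℚ)+1) ≠ 0 := by positivity
    field_simp
    linarith [h']
  rw [Finset.sum_congr rfl (fun k _ => key k), ← Finset.sum_div]
  congr 1
  have h := sumA m
  have h2 : ((∑ k ∈ range m, (m+1).choose (k+1) : ℕ) : ℚ) + 2 = 2^(m+1) := by
    exact_mod_cast h
  push_cast at h2 ⊢
  linarith

/-- `X ~ Binomial(n-1, 1/2)`; conditional expectation `E[1/(1+X) | X ≤ n-2] = 2/n`,
written as the ratio of the restricted sums of the binomial pmf. -/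
theorem cond_exp_inv_one_add_binomial (n : ℕ) (hn : 2 ≤ n) :
    (∑ k ∈ Finset.range (n - 1),
        ((n - 1).choose k : ℚ) * (1 / 2) ^ (n - 1) * (1 / ((k : ℚ) + 1))) /
      (∑ k ∈ Finset.range (n - 1), ((n - 1).choose k : ℚ) * (1 / 2) ^ (n - 1))
      = 2 / (n : ℚ) := by
  obtain ⟨m, rfl⟩ : ∃ m, n = m + 1 := ⟨n - 1, by omega⟩
  have hm : 1 ≤ m := by omega
  simp only [Nat.add_sub_cancel]
  have hnum : (∑ k ∈ Finset.range m,
      ((m).choose k : ℚ) * (1 / 2) ^ m * (1 / ((k : ℚ) + 1)))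
      = (1/2:ℚ)^m * ((2^(m+1) - 2)/((m:ℚ)+1)) := by
    rw [← sumC, Finset.mul_sum]
    exact Finset.sum_congr rfl fun k _ => by ring
  have hden : (∑ k ∈ Finset.range m, ((m).choose k : ℚ) * (1 / 2) ^ m)
      = (1/2:ℚ)^m * (2^m - 1) := by
    rw [← Finset.sum_mul]
    have h : ((∑ k ∈ range m, m.choose k : ℕ) : ℚ) + 1 = 2^m := by
      exact_mod_cast sumB m
    push_cast at h
    rw [show (∑ k ∈ range m, (m.choose k : ℚ)) = 2^m - 1 by linarith]
    ring
  rw [hnum, hden]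
  have hp : (1/2:ℚ)^m ≠ 0 := by positivity
  have h2 : (2:ℚ)^m - 1 ≠ 0 := by
    have : (2:ℚ)^1 ≤ 2^m := by
      apply pow_le_pow_right₀ (by norm_num) hm
    norm_num at this ⊢
    linarith
  have hm1 : ((m:ℚ)+1) ≠ 0 := by positivity
  field_simp
  push_cast
  ring
end

section
/- Let x_1,...,x_n and x'_1,...,x'_n be two independent i.i.д. samples uniform on {0,1}² with targets f*(s,t) = c₁s + c₂t, let ξ_{st} and ξ'_{st} be the respective counts of outcome (s,t), and let A be the event that ξ_{s0}+ξ_{s1} ≥ 1 and ξ'_{0t}+ξ'_{1t} ≥ 1 for all s,t ∈ {0,1}. Define h¹ from the first sample as h¹(s,t) = c₁s + c₂ξ_{s1}/(ξ_{s0}+ξ_{s1}) and h² from the second sample as the least-squares stump on the second feature fit to residuals f* - h¹ evaluated on the second sample. Then E[h¹(s,t) + h²(s,t) | A] = c₁ s + c₂ t exactly, for all (s,t) ∈ {0,1}². -/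
/-- Number of samples equal to `(s, t)` among `ω : Fin n → Bool × Bool`. -/
def cnt {n : ℕ} (ω : Fin n → Bool × Bool) (s t : Bool) : ℕ :=
  (Finset.univ.filter (fun k => ω k = (s, t))).card

/-- Real value of a binary feature. -/
def bval (b : Bool) : ℝ := if b then 1 else 0

/-- The target `f*(s,t) = c₁ s + c₂ t`. -/
def fstar (c₁ c₂ : ℝ) (x : Bool × Bool) : ℝ := c₁ * bval x.1 + c₂ * bval x.2

/-- The first stump, built from the first sample `ω`. -/
noncomputable def h1 {n : ℕ} (c₁ c₂ : ℝ) (ω : Fin n → Bool × Bool) (x : Bool × Bool) : ℝ :=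
  c₁ * bval x.1 +
    c₂ * ((cnt ω x.1 true : ℝ) / ((cnt ω x.1 false : ℝ) + (cnt ω x.1 true : ℝ)))

/-- The second stump: least-squares stump on the second feature fit to the residuals
`f*(x'_k) - h¹(x'_k)` evaluated on the second (independent) sample `ω'`. -/
noncomputable def h2 {n : ℕ} (c₁ c₂ : ℝ) (ω ω' : Fin n → Bool × Bool) (t : Bool) : ℝ :=
  (∑ k : Fin n, if (ω' k).2 = t then fstar c₁ c₂ (ω' k) - h1 c₁ c₂ ω (ω' k) else 0) /
    ((cnt ω' false t : ℝ) + (cnt ω' true t : ℝ))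

/-- The event `A`: both leaves of `h¹` are nonempty in the first sample and both
leaves of `h²` are nonempty in the second sample. -/
def eventA {n : ℕ} (p : (Fin n → Bool × Bool) × (Fin n → Bool × Bool)) : Prop :=
  (∀ s : Bool, 1 ≤ cnt p.1 s false + cnt p.1 s true) ∧
    (∀ t : Bool, 1 ≤ cnt p.2 false t + cnt p.2 true t)

instance {n : ℕ} (p : (Fin n → Bool × Bool) × (Fin n → Bool × Bool)) :
    Decidable (eventA p) := by
  unfold eventA; infer_instance

/-!
Write `ξ_{st}` for the counts of the first sample and `r_s = ξ_{s1} / (ξ_{s0} + ξ_{s1})` for the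
leaf ratios of `h¹`. On the second sample, `h²(t)` equals `c₂ t` minus the average of `c₂ r_s` over
the points of column `t`, i.e. `c₂ t - c₂ (w₀ r₀ + w₁ r₁)` with weights `w₀ + w₁ = 1` depending only
on the second sample. Flipping the first feature of every point of the first sample preserves
the event and swaps `r₀` and `r₁`, so `r₀`, `r₁` have the same conditional expectation and the
correction `c₂ (r_s - w₀ r₀ - w₁ r₁)` averages to zero over the first sample, for every second
sample in the event.
-/

open Finset

section

variable {n : ℕ}

def RowTotalsPos (ω : Fin n → Bool × Bool) : Prop :=
  ∀ s : Bool, 1 ≤ cnt ω s false + cnt ω s true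

def ColTotalsPos (ω : Fin n → Bool × Bool) : Prop :=
  ∀ t : Bool, 1 ≤ cnt ω false t + cnt ω true t

instance : DecidablePred (RowTotalsPos (n := n)) := fun ω => by
  unfold RowTotalsPos; infer_instance

instance : DecidablePred (ColTotalsPos (n := n)) := fun ω => by
  unfold ColTotalsPos; infer_instance

theorem filter_eventA_eq_product :
    univ.filter (fun p : (Fin n → Bool × Bool) × (Fin n → Bool × Bool) => eventA p) =
      univ.filter RowTotalsPos ×ˢ univ.filter ColTotalsPos := by
  rw [← univ_product_univ, ← filter_product]
  rfl

theorem filter_eventA_nonempty (hn : 2 ≤ n) :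
    (univ.filter (fun p : (Fin n → Bool × Bool) × (Fin n → Bool × Bool) => eventA p)).Nonempty := by
  let ω : Fin n → Bool × Bool := fun k => (decide (k.val = 0), decide (k.val = 0))
  have hdiag : ∀ b, 1 ≤ cnt ω b b := by
    intro b
    refine card_pos.mpr ⟨⟨if b then 0 else 1, by split <;> omega⟩, ?_⟩
    cases b <;> simp [ω]
  refine ⟨(ω, ω), mem_filter.mpr ⟨mem_univ _, fun s => ?_, fun t => ?_⟩⟩
  · cases s
    · exact (hdiag false).trans (Nat.le_add_right _ _)
    · exact (hdiag true).trans (Nat.le_add_left _ _)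
  · cases t
    · exact (hdiag false).trans (Nat.le_add_right _ _)
    · exact (hdiag true).trans (Nat.le_add_left _ _)

theorem sum_ite_snd_eq (ω : Fin n → Bool × Bool) (t : Bool) (g : Bool × Bool → ℝ) :
    (∑ k, if (ω k).2 = t then g (ω k) else 0) =
      cnt ω false t * g (false, t) + cnt ω true t * g (true, t) := by
  have hcnt : ∀ s, (∑ k, if ω k = (s, t) then g (s, t) else 0) = cnt ω s t * g (s, t) := by
    intro s
    rw [← sum_filter, sum_const, nsmul_eq_mul, cnt]
  rw [← hcnt, ← hcnt, ← sum_add_distrib]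
  refine sum_congr rfl fun k _ => ?_
  obtain ⟨a, b⟩ := ω k
  cases a <;> cases b <;> cases t <;> simp

noncomputable def leafRatio (ω : Fin n → Bool × Bool) (s : Bool) : ℝ :=
  (cnt ω s true : ℝ) / ((cnt ω s false : ℝ) + (cnt ω s true : ℝ))

def flipRows (ω : Fin n → Bool × Bool) : Fin n → Bool × Bool :=
  fun k => (!(ω k).1, (ω k).2)

theorem flipRows_involutive : Function.Involutive (flipRows (n := n)) := fun ω => by
  funext k; simp [flipRows]

theorem cnt_flipRows (ω : Fin n → Bool × Bool) (s t : Bool) :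
    cnt (flipRows ω) s t = cnt ω (!s) t := by
  unfold cnt flipRows
  congr 1
  ext k
  simp only [mem_filter, mem_univ, true_and, Prod.ext_iff]
  cases (ω k).1 <;> cases s <;> simp

theorem rowTotalsPos_flipRows {ω : Fin n → Bool × Bool} (h : RowTotalsPos ω) :
    RowTotalsPos (flipRows ω) := fun s => by
  simpa only [cnt_flipRows] using h (!s)

theorem leafRatio_flipRows (ω : Fin n → Bool × Bool) (s : Bool) :
    leafRatio (flipRows ω) s = leafRatio ω (!s) := by
  simp only [leafRatio, cnt_flipRows]

theorem sum_leafRatio_true :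
    ∑ ω ∈ univ.filter (RowTotalsPos (n := n)), leafRatio ω true =
      ∑ ω ∈ univ.filter (RowTotalsPos (n := n)), leafRatio ω false := by
  refine sum_nbij' flipRows flipRows ?_ ?_ (fun ω _ => flipRows_involutive ω)
    (fun ω _ => flipRows_involutive ω) (fun ω _ => (leafRatio_flipRows ω false).symm)
  all_goals
    intro ω hω
    simp only [mem_filter, mem_univ, true_and] at hω ⊢
    exact rowTotalsPos_flipRows hω

theorem sum_leafRatio_eq (s : Bool) :
    ∑ ω ∈ univ.filter (RowTotalsPos (n := n)), leafRatio ω s =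
      ∑ ω ∈ univ.filter (RowTotalsPos (n := n)), leafRatio ω false := by
  cases s
  · rfl
  · exact sum_leafRatio_true

noncomputable def colWeight (ω : Fin n → Bool × Bool) (s t : Bool) : ℝ :=
  (cnt ω s t : ℝ) / ((cnt ω false t : ℝ) + (cnt ω true t : ℝ))

theorem colWeight_false_add_true {ω : Fin n → Bool × Bool} {t : Bool}
    (h : 1 ≤ cnt ω false t + cnt ω true t) : colWeight ω false t + colWeight ω true t = 1 := by
  have hpos : (0 : ℝ) < (cnt ω false t : ℝ) + (cnt ω true t : ℝ) := by exact_mod_cast h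
  rw [colWeight, colWeight, ← add_div, div_self hpos.ne']

theorem h1_eq (c₁ c₂ : ℝ) (ω : Fin n → Bool × Bool) (x : Bool × Bool) :
    h1 c₁ c₂ ω x = c₁ * bval x.1 + c₂ * leafRatio ω x.1 :=
  rfl

theorem fstar_sub_h1 (c₁ c₂ : ℝ) (ω : Fin n → Bool × Bool) (x : Bool × Bool) :
    fstar c₁ c₂ x - h1 c₁ c₂ ω x = c₂ * (bval x.2 - leafRatio ω x.1) := by
  rw [fstar, h1_eq]; ring

theorem h2_eq (c₁ c₂ : ℝ) (ω ω' : Fin n → Bool × Bool) (t : Bool) :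
    h2 c₁ c₂ ω ω' t = colWeight ω' false t * (c₂ * (bval t - leafRatio ω false)) +
      colWeight ω' true t * (c₂ * (bval t - leafRatio ω true)) := by
  rw [h2, sum_ite_snd_eq ω' t fun x => fstar c₁ c₂ x - h1 c₁ c₂ ω x, fstar_sub_h1, fstar_sub_h1,
    colWeight, colWeight]
  ring

theorem sum_h1_add_h2 (c₁ c₂ : ℝ) {ω' : Fin n → Bool × Bool} (hω' : ColTotalsPos ω')
    (s t : Bool) :
    ∑ ω ∈ univ.filter (RowTotalsPos (n := n)), (h1 c₁ c₂ ω (s, t) + h2 c₁ c₂ ω ω' t) =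
      #(univ.filter (RowTotalsPos (n := n))) * fstar c₁ c₂ (s, t) := by
  set w₀ := colWeight ω' false t
  set w₁ := colWeight ω' true t
  have hw : w₀ + w₁ = 1 := colWeight_false_add_true (hω' t)
  have hpoint : ∀ ω : Fin n → Bool × Bool, h1 c₁ c₂ ω (s, t) + h2 c₁ c₂ ω ω' t =
      fstar c₁ c₂ (s, t) +
        c₂ * (leafRatio ω s - w₀ * leafRatio ω false - w₁ * leafRatio ω true) := by
    intro ω
    rw [h2_eq, h1_eq, fstar]
    linear_combination (c₂ * bval t) * hw
  simp only [hpoint, sum_add_distrib, sum_const, nsmul_eq_mul, ← mul_sum, sum_sub_distrib,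
    sum_leafRatio_eq s, sum_leafRatio_true]
  linear_combination (-c₂ * ∑ ω ∈ univ.filter (RowTotalsPos (n := n)), leafRatio ω false) * hw

end

/-- Theorem 1, part 1: with two independent samples, the two-step boosted model is
conditionally unbiased: `E[h¹(s,t) + h²(s,t) | A] = c₁ s + c₂ t` exactly. -/
theorem unbiased_independent_datasets (n : ℕ) (hn : 2 ≤ n) (c₁ c₂ : ℝ) (s t : Bool) :
    (∑ p ∈ Finset.univ.filter
        (fun p : (Fin n → Bool × Bool) × (Fin n → Bool × Bool) => eventA p),
        (h1 c₁ c₂ p.1 (s, t) + h2 c₁ c₂ p.1 p.2 t)) /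
      ((Finset.univ.filter
        (fun p : (Fin n → Bool × Bool) × (Fin n → Bool × Bool) => eventA p)).card : ℝ)
      = c₁ * bval s + c₂ * bval t := by
  have hcard : (#(univ.filter fun p : (Fin n → Bool × Bool) × (Fin n → Bool × Bool) =>
      eventA p) : ℝ) ≠ 0 := by
    exact_mod_cast (filter_eventA_nonempty hn).card_pos.ne'
  rw [div_eq_iff hcard, filter_eventA_eq_product, sum_product_right,
    sum_congr rfl fun ω' hω' => sum_h1_add_h2 c₁ c₂ (mem_filter.mp hω').2 s t,
    sum_const, nsmul_eq_mul, card_product, Nat.cast_mul, fstar]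
  ring
end
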